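/- (Proposition 1) In the IRM-example generating model, fix indices (i,j) with Γ_{ij} ≠ 0, where Γ = (W_{xy} W_{yx})ᵀ. For any two parameter values 0 < σ < σ', the absolute value of the Pearson correlation between the i-th coordinate of x₁(σ) and the j-th coordinate of x₂(σ) is strictly less than the absolute value of the Pearson correlation between the i-th coordinate of x₁(σ') and the j-th coordinate of x₂(σ'). In other words, |Corr((x₁)_i, (x₂)_j)| is strictly increasing in σ on (0, ∞). -/

import Mathlib

open MeasureTheory ProbabilityTheory Matrix

/-- Covariance of two real random variables: `Cov(U,V) = E[UV] − E[U]·E[V]`. -/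
noncomputable def cov {Ω : Type*} [MeasurableSpace Ω] (μ : Measure Ω) (U V : Ω → ℝ) : ℝ :=
  (∫ ω, U ω * V ω ∂μ) - (∫ ω, U ω ∂μ) * (∫ ω, V ω ∂μ)

/-- Variance of a real random variable: `Var(U) = Cov(U,U)`. -/
noncomputable def var {Ω : Type*} [MeasurableSpace Ω] (μ : Measure Ω) (U : Ω → ℝ) : ℝ :=
  cov μ U U

/-- Pearson correlation: `Corr(U,V) = Cov(U,V) / √(Var(U)·Var(V))`. -/
noncomputable def corr {Ω : Type*} [MeasurableSpace Ω] (μ : Measure Ω) (U V : Ω → ℝ) : ℝ :=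
  cov μ U V / Real.sqrt (var μ U * var μ V)

/-!
The coordinates `Z k · m` are centred, uncorrelated within each `Z k` and independent across
`k`, so they form an orthonormal family for the covariance: the correlation of two linear
combinations of them is the cosine of the angle between their coefficient vectors. Writing
`A = W_xy W_yx`, one has `(x₁)_i = σ Z₀ᵢ` and `(x₂)_j = σ Aⱼ ⬝ Z₀ + σ (W_xy)ⱼ ⬝ Z₁ + Z₂ⱼ`, hence
`Corr = A_{ji} σ² / √(σ² (σ² c + 1))` with `c = ‖Aⱼ‖² + ‖(W_xy)ⱼ‖²`. For `σ > 0` this is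
`A_{ji} σ / √(σ² c + 1)`, strictly increasing in `σ`.
-/

lemma cov_eq_covariance {Ω : Type*} [MeasurableSpace Ω] {μ : Measure Ω} [IsProbabilityMeasure μ]
    {U V : Ω → ℝ} (hU : MemLp U 2 μ) (hV : MemLp V 2 μ) :
    cov μ U V = covariance U V μ :=
  (covariance_eq_sub hU hV).symm

section Orthonormal

variable {Ω ι : Type*} [MeasurableSpace Ω] {μ : Measure Ω} [Fintype ι] [DecidableEq ι]
  {ξ : ι → Ω → ℝ}

lemma covariance_dotProduct_of_orthonormal [IsFiniteMeasure μ] (hξ : ∀ p, MemLp (ξ p) 2 μ)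
    (horth : ∀ p q, covariance (ξ p) (ξ q) μ = if p = q then 1 else 0) (a b : ι → ℝ) :
    covariance (fun ω => a ⬝ᵥ fun p => ξ p ω) (fun ω => b ⬝ᵥ fun p => ξ p ω) μ = a ⬝ᵥ b := by
  simp only [dotProduct]
  rw [covariance_fun_sum_fun_sum (fun p => (hξ p).const_mul (a p))
    (fun p => (hξ p).const_mul (b p))]
  simp only [covariance_const_mul_left, covariance_const_mul_right, horth, mul_ite, mul_one,
    mul_zero, Finset.sum_ite_eq, Finset.mem_univ, if_true]
  exact Fintype.sum_congr _ _ fun p => mul_comm _ _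

lemma corr_dotProduct_of_orthonormal [IsProbabilityMeasure μ] (hξ : ∀ p, MemLp (ξ p) 2 μ)
    (horth : ∀ p q, covariance (ξ p) (ξ q) μ = if p = q then 1 else 0) (a b : ι → ℝ) :
    corr μ (fun ω => a ⬝ᵥ fun p => ξ p ω) (fun ω => b ⬝ᵥ fun p => ξ p ω) =
      a ⬝ᵥ b / √((a ⬝ᵥ a) * (b ⬝ᵥ b)) := by
  have hL2 (c : ι → ℝ) : MemLp (fun ω => c ⬝ᵥ fun p => ξ p ω) 2 μ :=
    memLp_finsetSum _ fun p _ => (hξ p).const_mul (c p)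
  simp only [corr, var, cov_eq_covariance (hL2 _) (hL2 _),
    covariance_dotProduct_of_orthonormal hξ horth]

end Orthonormal

lemma covariance_coord_of_iIndepFun {Ω κ ι : Type*} [MeasurableSpace Ω] {μ : Measure Ω}
    [IsProbabilityMeasure μ] [DecidableEq κ] [DecidableEq ι] {Z : κ → Ω → ι → ℝ}
    (hindep : iIndepFun Z μ)
    (hL2 : ∀ k m, MemLp (fun ω => Z k ω m) 2 μ) (hmean : ∀ k m, ∫ ω, Z k ω m ∂μ = 0)
    (hunit : ∀ k m m', ∫ ω, Z k ω m * Z k ω m' ∂μ = if m = m' then 1 else 0) (p q : κ × ι) :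
    covariance (fun ω => Z p.1 ω p.2) (fun ω => Z q.1 ω q.2) μ = if p = q then 1 else 0 := by
  obtain ⟨k, m⟩ := p
  obtain ⟨k', m'⟩ := q
  by_cases hk : k = k'
  · subst hk
    rw [covariance_eq_sub (hL2 k m) (hL2 k m')]
    simp [hunit, hmean]
  · rw [if_neg (by simp [hk]), IndepFun.covariance_eq_zero _ (hL2 k m) (hL2 k' m')]
    exact (hindep.indepFun hk).comp (measurable_pi_apply m) (measurable_pi_apply m')

lemma uncurry_dotProduct_uncurry {κ ι R : Type*} [Fintype κ] [Fintype ι] [Mul R]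
    [AddCommMonoid R] (a b : κ → ι → R) :
    Function.uncurry a ⬝ᵥ Function.uncurry b = ∑ k, a k ⬝ᵥ b k :=
  Fintype.sum_prod_type _

lemma sq_div_sqrt_sq_mul_strictMonoOn {c : ℝ} (hc : 0 ≤ c) :
    StrictMonoOn (fun s : ℝ => s ^ 2 / √(s ^ 2 * (s ^ 2 * c + 1))) (Set.Ioi 0) := by
  have hsq (s : ℝ) (hs : 0 < s) :
      (s ^ 2 / √(s ^ 2 * (s ^ 2 * c + 1))) ^ 2 = s ^ 2 / (s ^ 2 * c + 1) := by
    rw [div_pow, Real.sq_sqrt (by positivity)]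
    field_simp
  intro s hs t ht hst
  refine lt_of_pow_lt_pow_left₀ 2 (by positivity) ?_
  rw [hsq s hs, hsq t ht, div_lt_div_iff₀ (by positivity) (by positivity)]
  have : s ^ 2 < t ^ 2 := pow_lt_pow_left₀ hst (le_of_lt hs) two_ne_zero
  nlinarith

section Model

variable {ι : Type*} [Fintype ι] [DecidableEq ι]

lemma smul_apply_eq_uncurry_dotProduct (s : ℝ) (i : ι) (z : Fin 3 → ι → ℝ) :
    (s • z 0) i = Function.uncurry ![Pi.single i s, 0, 0] ⬝ᵥ Function.uncurry z := by
  simp [uncurry_dotProduct_uncurry, Fin.sum_univ_three, single_dotProduct]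

lemma mulVec_add_mulVec_apply_eq_uncurry_dotProduct (A B : Matrix ι ι ℝ) (s : ℝ) (j : ι)
    (z : Fin 3 → ι → ℝ) :
    (B *ᵥ (A *ᵥ (s • z 0) + s • z 1) + z 2) j =
      Function.uncurry ![s • (B * A) j, s • B j, Pi.single j 1] ⬝ᵥ Function.uncurry z := by
  simp [uncurry_dotProduct_uncurry, Fin.sum_univ_three, mulVec_add, mulVec_smul, mulVec_mulVec,
    mulVec]

end Model

theorem abs_correlation_strictMono_general {Ω : Type*} [MeasurableSpace Ω] (μ : Measure Ω)
    [IsProbabilityMeasure μ] {d : ℕ}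
    (Z : Fin 3 → Ω → (Fin d → ℝ))
    (hindep : iIndepFun Z μ)
    (hL2 : ∀ k i, MemLp (fun ω => Z k ω i) 2 μ)
    (hmean : ∀ k i, (∫ ω, Z k ω i ∂μ) = 0)
    (hunit : ∀ k i j, (∫ ω, Z k ω i * Z k ω j ∂μ) = if i = j then 1 else 0)
    (Wyx Wxy : Matrix (Fin d) (Fin d) ℝ)
    (x₁ ytilde x₂ : ℝ → Ω → Fin d → ℝ)
    (hx₁ : ∀ σ ω, x₁ σ ω = σ • Z 0 ω)
    (hy : ∀ σ ω, ytilde σ ω = Wyx.mulVec (x₁ σ ω) + σ • Z 1 ω)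
    (hx₂ : ∀ σ ω, x₂ σ ω = Wxy.mulVec (ytilde σ ω) + Z 2 ω)
    (i j : Fin d) (hΓ : ((Wxy * Wyx)ᵀ) i j ≠ 0)
    (σ σ' : ℝ) (hσ : 0 < σ) (hσσ' : σ < σ') :
    |corr μ (fun ω => x₁ σ ω i) (fun ω => x₂ σ ω j)| <
      |corr μ (fun ω => x₁ σ' ω i) (fun ω => x₂ σ' ω j)| := by
  set c := (Wxy * Wyx) j ⬝ᵥ (Wxy * Wyx) j + Wxy j ⬝ᵥ Wxy j
  have hcorr (s : ℝ) : corr μ (fun ω => x₁ s ω i) (fun ω => x₂ s ω j) =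
      (Wxy * Wyx) j i * (s ^ 2 / √(s ^ 2 * (s ^ 2 * c + 1))) := by
    have hx₁i : (fun ω => x₁ s ω i) =
        fun ω => Function.uncurry ![Pi.single i s, 0, 0] ⬝ᵥ fun p => Z p.1 ω p.2 :=
      funext fun ω => by rw [hx₁]; exact smul_apply_eq_uncurry_dotProduct s i (Z · ω)
    have hx₂j : (fun ω => x₂ s ω j) = fun ω =>
        Function.uncurry ![s • (Wxy * Wyx) j, s • Wxy j, Pi.single j 1] ⬝ᵥ
          fun p => Z p.1 ω p.2 :=
      funext fun ω => by
        rw [hx₂, hy, hx₁]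
        exact mulVec_add_mulVec_apply_eq_uncurry_dotProduct Wyx Wxy s j (Z · ω)
    rw [hx₁i, hx₂j, corr_dotProduct_of_orthonormal (ξ := fun (p : Fin 3 × Fin d) ω => Z p.1 ω p.2)
      (fun p => hL2 p.1 p.2) (covariance_coord_of_iIndepFun hindep hL2 hmean hunit)]
    simp only [uncurry_dotProduct_uncurry, Fin.sum_univ_three, cons_val_zero, cons_val_one,
      cons_val, Pi.zero_apply, Pi.single_eq_same, dotProduct_smul, smul_dotProduct,
      single_dotProduct, dotProduct_single, zero_dotProduct, dotProduct_zero, smul_eq_mul, c]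
    ring_nf
  have hc : 0 ≤ c := add_nonneg (dotProduct_self_star_nonneg _) (dotProduct_self_star_nonneg _)
  have hσ' : 0 < σ' := hσ.trans hσσ'
  have hf (s : ℝ) : 0 ≤ s ^ 2 / √(s ^ 2 * (s ^ 2 * c + 1)) := by positivity
  rw [hcorr, hcorr, abs_mul, abs_mul, abs_of_nonneg (hf σ), abs_of_nonneg (hf σ')]
  exact mul_lt_mul_of_pos_left (sq_div_sqrt_sq_mul_strictMonoOn hc hσ hσ' hσσ')
    (abs_pos.mpr hΓ)

/-- (Proposition 1) In the IRM-example generating model, if `Γ_{ij} ≠ 0` where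
`Γ = (W_xy · W_yx)ᵀ`, then `|Corr((x₁(σ))_i, (x₂(σ))_j)|` is strictly increasing in `σ`
on `(0, ∞)`. -/
theorem abs_correlation_strictMono {Ω : Type*} [MeasurableSpace Ω] (μ : Measure Ω)
    [IsProbabilityMeasure μ] {d : ℕ}
    (Z : Fin 3 → Ω → (Fin d → ℝ))
    (hmeas : ∀ k, Measurable (Z k))
    (hindep : iIndepFun Z μ)
    (hL2 : ∀ k i, MemLp (fun ω => Z k ω i) 2 μ)
    (hmean : ∀ k i, (∫ ω, Z k ω i ∂μ) = 0)
    (hunit : ∀ k i j, (∫ ω, Z k ω i * Z k ω j ∂μ) = if i = j then 1 else 0)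
    (Wyx Wxy : Matrix (Fin d) (Fin d) ℝ)
    (x₁ ytilde x₂ : ℝ → Ω → Fin d → ℝ)
    (hx₁ : ∀ σ ω, x₁ σ ω = σ • Z 0 ω)
    (hy : ∀ σ ω, ytilde σ ω = Wyx.mulVec (x₁ σ ω) + σ • Z 1 ω)
    (hx₂ : ∀ σ ω, x₂ σ ω = Wxy.mulVec (ytilde σ ω) + Z 2 ω)
    (i j : Fin d) (hΓ : ((Wxy * Wyx)ᵀ) i j ≠ 0)
    (σ σ' : ℝ) (hσ : 0 < σ) (hσσ' : σ < σ') :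
    |corr μ (fun ω => x₁ σ ω i) (fun ω => x₂ σ ω j)| <
      |corr μ (fun ω => x₁ σ' ω i) (fun ω => x₂ σ' ω j)| :=
  abs_correlation_strictMono_general μ Z hindep hL2 hmean hunit Wyx Wxy x₁ ytilde x₂ hx₁ hy hx₂ i j
    hΓ σ σ' hσ hσσ'
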